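/- arXiv:2502.06558 — 3 statements merged into one kernel-verified Lean document; each statement's English description precedes it below -/
import Mathlib

section
/- Let I be a set of open/closed unit intervals properly colorable with ω colors, and let x be an open interval in I. Then any greedy (FirstFit) coloring of the intersection graph of I, in any arrival order, assigns x a color at most 2ω - 1. -/
/-!
Let `x = (a, a + 1)`. Every unit interval meeting `x` contains `a`, contains `a + 1`, or equals
`x`. The earlier neighbours of `x` therefore split into two families, each of which together
with `x` is a clique: those containing `a` or equal to `x`, and those containing `a + 1`. A clique
of an `ω`-colorable graph has at most `ω` vertices, so `x` has at most `2ω - 2` earlier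
neighbours, and FirstFit finds a free color among `1, …, 2ω - 1`.
-/

/-- A set of reals is an open or closed unit interval. -/
def IsUnitInterval (s : Set ℝ) : Prop :=
  ∃ r : ℝ, s = Set.Icc r (r + 1) ∨ s = Set.Ioo r (r + 1)

open Set

theorem IsUnitInterval.mem_or_mem_or_eq_Ioo_of_inter_nonempty {s : Set ℝ} (hs : IsUnitInterval s)
    {a : ℝ} (h : (s ∩ Ioo a (a + 1)).Nonempty) :
    a ∈ s ∨ a + 1 ∈ s ∨ s = Ioo a (a + 1) := by
  obtain ⟨t, hts, hat, hta⟩ := h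
  obtain ⟨r, rfl | rfl⟩ := hs <;> obtain ⟨hrt, htr⟩ := hts
  · rcases le_or_gt r a with hra | hra
    · exact Or.inl ⟨hra, by linarith⟩
    · exact Or.inr (Or.inl ⟨by linarith, by linarith⟩)
  · rcases lt_trichotomy r a with hra | rfl | hra
    · exact Or.inl ⟨hra, by linarith⟩
    · exact Or.inr (Or.inr rfl)
    · exact Or.inr (Or.inl ⟨by linarith, by linarith⟩)

theorem Set.Pairwise.finite_and_ncard_le_of_coloring {ι : Type*} {r : ι → ι → Prop} {ω : ℕ}
    (C : ι → Fin ω) (hC : ∀ i j, i ≠ j → r i j → C i ≠ C j) {s : Set ι} (hs : s.Pairwise r) :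
    s.Finite ∧ s.ncard ≤ ω := by
  have hinj : s.InjOn C := fun i hi j hj hij => by_contra fun hne => hC i j hne (hs hi hj hne) hij
  refine ⟨Finite.of_finite_image (toFinite _) hinj, ?_⟩
  simpa using ncard_le_ncard_of_injOn C (fun i _ => mem_univ (C i)) hinj

theorem Nat.sInf_one_le_notMem_le_ncard_add_one {F : Set ℕ} (hF : F.Finite) :
    sInf {n | 1 ≤ n ∧ n ∉ F} ≤ F.ncard + 1 := by
  have hcard : hF.toFinset.card < (Finset.Icc 1 (F.ncard + 1)).card := by
    rw [Nat.card_Icc, ← ncard_eq_toFinset_card F hF]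
    omega
  obtain ⟨n, hn, hnF⟩ := Finset.exists_mem_notMem_of_card_lt_card hcard
  rw [Finset.mem_Icc] at hn
  exact (Nat.sInf_le (show n ∈ {n | 1 ≤ n ∧ n ∉ F} from ⟨hn.1, by simpa using hnF⟩)).trans hn.2

theorem ncard_neighbors_Ioo_le {ι : Type*} (f : ι → Set ℝ) (hunit : ∀ i, IsUnitInterval (f i))
    {ω : ℕ} (C : ι → Fin ω) (hC : ∀ i j, i ≠ j → (f i ∩ f j).Nonempty → C i ≠ C j)
    {x : ι} {a : ℝ} (hx : f x = Ioo a (a + 1)) :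
    {j | j ≠ x ∧ (f x ∩ f j).Nonempty}.Finite ∧
      {j | j ≠ x ∧ (f x ∩ f j).Nonempty}.ncard ≤ 2 * ω - 2 := by
  set N := {j | j ≠ x ∧ (f x ∩ f j).Nonempty}
  have clique_bound : ∀ s ⊆ N, s.Pairwise (fun i j => (f i ∩ f j).Nonempty) →
      s.Finite ∧ s.ncard + 1 ≤ ω := by
    intro s hsN hs
    have hxs : x ∉ s := fun h => (hsN h).1 rfl
    obtain ⟨hfin, hcard⟩ := (hs.insert_of_notMem hxs fun j hj =>
      ⟨(hsN hj).2, inter_comm (f x) (f j) ▸ (hsN hj).2⟩).finite_and_ncard_le_of_coloring C hC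
    have hsfin := hfin.subset (subset_insert x s)
    rw [ncard_insert_of_notMem hxs hsfin] at hcard
    exact ⟨hsfin, hcard⟩
  set A := {j ∈ N | a ∈ f j ∨ f j = f x}
  set B := {j ∈ N | a + 1 ∈ f j}
  have hNAB : N ⊆ A ∪ B := by
    intro j hj
    rcases (hunit j).mem_or_mem_or_eq_Ioo_of_inter_nonempty
      (by rw [← hx, inter_comm]; exact hj.2) with h | h | h
    · exact Or.inl ⟨hj, Or.inl h⟩
    · exact Or.inr ⟨hj, h⟩
    · exact Or.inl ⟨hj, Or.inr (h.trans hx.symm)⟩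
  have hA : A.Pairwise (fun i j => (f i ∩ f j).Nonempty) := by
    rintro i ⟨hiN, hia | hix⟩ j ⟨hjN, hja | hjx⟩ -
    · exact ⟨a, hia, hja⟩
    · rw [hjx, inter_comm]; exact hiN.2
    · rw [hix]; exact hjN.2
    · rw [hix]; exact hjN.2
  have hB : B.Pairwise (fun i j => (f i ∩ f j).Nonempty) :=
    fun i hi j hj _ => ⟨a + 1, hi.2, hj.2⟩
  obtain ⟨hAfin, hAcard⟩ := clique_bound A (sep_subset _ _) hA
  obtain ⟨hBfin, hBcard⟩ := clique_bound B (sep_subset _ _) hB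
  refine ⟨(hAfin.union hBfin).subset hNAB, ?_⟩
  have := (ncard_le_ncard hNAB (hAfin.union hBfin)).trans (ncard_union_le A B)
  omega

theorem stmt7_general {ι : Type*} (f : ι → Set ℝ)
    (hunit : ∀ i, IsUnitInterval (f i)) (ω : ℕ) (C : ι → Fin ω)
    (hC : ∀ i j, i ≠ j → (f i ∩ f j).Nonempty → C i ≠ C j)
    (ord : ι → ℕ) (c : ι → ℕ)
    (hc : ∀ i, c i = sInf {n : ℕ | 1 ≤ n ∧
      ∀ j, j ≠ i → (f i ∩ f j).Nonempty → ord j < ord i → c j ≠ n})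
    (x : ι) (hx : ∃ a : ℝ, f x = Set.Ioo a (a + 1)) :
    c x ≤ 2 * ω - 1 := by
  obtain ⟨a, hfx⟩ := hx
  have hω : 1 ≤ ω := (C x).pos
  set earlier := {j | j ≠ x ∧ (f x ∩ f j).Nonempty ∧ ord j < ord x}
  have hsub : earlier ⊆ {j | j ≠ x ∧ (f x ∩ f j).Nonempty} := fun j hj => ⟨hj.1, hj.2.1⟩
  obtain ⟨hfin, hcard⟩ := ncard_neighbors_Ioo_le f hunit C hC hfx
  have hearlier : earlier.Finite := hfin.subset hsub
  calc c x = sInf {n | 1 ≤ n ∧ n ∉ c '' earlier} := by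
        rw [hc x]
        congr 1; ext n
        simp only [mem_image, mem_ofPred_eq, not_exists, not_and, earlier]
        refine and_congr_right fun _ => ⟨fun h j hj hcj => h j hj.1 hj.2.1 hj.2.2 hcj,
          fun h j hjx hj hord => h j ⟨hjx, hj, hord⟩⟩
    _ ≤ (c '' earlier).ncard + 1 := Nat.sInf_one_le_notMem_le_ncard_add_one (hearlier.image c)
    _ ≤ earlier.ncard + 1 := by gcongr; exact ncard_image_le hearlier
    _ ≤ 2 * ω - 1 := by have := ncard_le_ncard hsub hfin; omega

/-- FirstFit on a family of open/closed unit intervals that is properly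
`ω`-colorable assigns any open interval a color at most `2ω - 1`. -/
theorem stmt7 {ι : Type*} (f : ι → Set ℝ)
    (hunit : ∀ i, IsUnitInterval (f i)) (ω : ℕ) (C : ι → Fin ω)
    (hC : ∀ i j, i ≠ j → (f i ∩ f j).Nonempty → C i ≠ C j)
    (ord : ι → ℕ) (hord : Function.Injective ord) (c : ι → ℕ)
    (hc : ∀ i, c i = sInf {n : ℕ | 1 ≤ n ∧
      ∀ j, j ≠ i → (f i ∩ f j).Nonempty → ord j < ord i → c j ≠ n})
    (x : ι) (hx : ∃ a : ℝ, f x = Set.Ioo a (a + 1)) :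
    c x ≤ 2 * ω - 1 :=
  stmt7_general f hunit ω C hC ord c hc x hx
end

section
/- Fix a proper coloring of a set I of open/closed unit intervals into ω rows, and let x ∈ I with FirstFit color c(x). If r_3(x) < r_1(x) + 2, then c(x) ≤ 2ω. -/
/-- `nbRows f C x k` is the number of rows (color classes of `C`) containing
exactly `k` intervals intersecting `f x` (other than `x` itself). -/
noncomputable def nbRows {ι : Type*} (f : ι → Set ℝ) {ω : ℕ} (C : ι → Fin ω) (x : ι) (k : ℕ) : ℕ :=
  {ρ : Fin ω | ({j | j ≠ x ∧ C j = ρ ∧ (f j ∩ f x).Nonempty}).ncard = k}.ncard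

open Set

lemma IsUnitInterval.exists_Ioo_subset_subset_Icc {s : Set ℝ} (hs : IsUnitInterval s) :
    ∃ a, Ioo a (a + 1) ⊆ s ∧ s ⊆ Icc a (a + 1) := by
  obtain ⟨a, rfl | rfl⟩ := hs
  · exact ⟨a, Ioo_subset_Icc_self, subset_rfl⟩
  · exact ⟨a, subset_rfl, Ioo_subset_Icc_self⟩

lemma abs_sub_le_one_of_inter_nonempty {s t : Set ℝ} {a b : ℝ} (hs : s ⊆ Icc a (a + 1))
    (ht : t ⊆ Icc b (b + 1)) (hst : (s ∩ t).Nonempty) : |a - b| ≤ 1 := by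
  obtain ⟨y, hys, hyt⟩ := hst
  obtain ⟨h₁, h₂⟩ := hs hys
  obtain ⟨h₃, h₄⟩ := ht hyt
  exact abs_le.mpr ⟨by linarith, by linarith⟩

lemma inter_nonempty_of_abs_sub_lt_one {s t : Set ℝ} {a b : ℝ} (hs : Ioo a (a + 1) ⊆ s)
    (ht : Ioo b (b + 1) ⊆ t) (hab : |a - b| < 1) : (s ∩ t).Nonempty := by
  obtain ⟨h₁, h₂⟩ := abs_lt.mp hab
  exact ⟨(a + b + 1) / 2, hs ⟨by linarith, by linarith⟩, ht ⟨by linarith, by linarith⟩⟩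

theorem encard_le_three_of_pairwiseDisjoint {ι : Type*} {f : ι → Set ℝ}
    (hf : ∀ i, IsUnitInterval (f i)) {s : Set ℝ} (hs : IsUnitInterval s) {S : Set ι}
    (hS : S.PairwiseDisjoint f) (hmeet : ∀ j ∈ S, (f j ∩ s).Nonempty) : S.encard ≤ 3 := by
  choose a hIoo hIcc using fun i => (hf i).exists_Ioo_subset_subset_Icc
  obtain ⟨r, -, hsr⟩ := hs.exists_Ioo_subset_subset_Icc
  have hmaps : MapsTo (fun j => ⌊a j - r⌋) S (Icc (-1) 1) := by
    intro j hj
    obtain ⟨h₁, h₂⟩ := abs_le.mp (abs_sub_le_one_of_inter_nonempty (hIcc j) hsr (hmeet j hj))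
    exact ⟨Int.le_floor.mpr (by push_cast; linarith), Int.floor_le_iff.mpr (by push_cast; linarith)⟩
  have hinj : InjOn (fun j => ⌊a j - r⌋) S := by
    intro i hi j hj hij
    by_contra hne
    have hclose : |a i - a j| < 1 := by
      simpa using Int.abs_sub_lt_one_of_floor_eq_floor hij
    exact not_disjoint_iff_nonempty_inter.mpr
      (inter_nonempty_of_abs_sub_lt_one (hIoo i) (hIoo j) hclose) (hS hi hj hne)
  calc S.encard ≤ (Icc (-1 : ℤ) 1).encard := encard_le_encard_of_injOn hmaps hinj
    _ = 3 := by rw [← Finset.coe_Icc, encard_coe_eq_coe_finsetCard]; rfl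

lemma Finset.card_univ_eq_sum_range_card_filter {α : Type*} [Fintype α] (g : α → ℕ) {n : ℕ}
    (hg : ∀ a, g a < n) :
    Fintype.card α = ∑ k ∈ Finset.range n, (Finset.univ.filter fun a => g a = k).card :=
  Finset.card_eq_sum_card_fiberwise fun a _ => Finset.mem_range.mpr (hg a)

lemma Finset.sum_univ_eq_sum_range_mul_card_filter {α : Type*} [Fintype α] (g : α → ℕ) {n : ℕ}
    (hg : ∀ a, g a < n) :
    ∑ a, g a = ∑ k ∈ Finset.range n, k * (Finset.univ.filter fun a => g a = k).card := by
  rw [← Finset.sum_fiberwise_of_maps_to (fun a _ => Finset.mem_range.mpr (hg a)) g]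
  refine Finset.sum_congr rfl fun k _ => ?_
  rw [Finset.sum_congr rfl fun a ha => (Finset.mem_filter.mp ha).2, Finset.sum_const,
    smul_eq_mul, mul_comm]

lemma Nat.sInf_le_ncard_add_one {ι : Type*} {E : Set ι} (hE : E.Finite) (g : ι → ℕ) {S : Set ℕ}
    (hS : ∀ n, 1 ≤ n → n ∉ g '' E → n ∈ S) : sInf S ≤ E.ncard + 1 := by
  classical
  have hcard : ((hE.image g).toFinset).card < (Finset.Icc 1 (E.ncard + 1)).card := by
    rw [← ncard_eq_toFinset_card _ (hE.image g), Nat.card_Icc]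
    exact Nat.lt_succ_of_le (ncard_image_le hE)
  obtain ⟨n, hn, hnE⟩ := Finset.exists_mem_notMem_of_card_lt_card hcard
  obtain ⟨hn₁, hn₂⟩ := Finset.mem_Icc.mp hn
  exact (Nat.sInf_le (hS n hn₁ fun h => hnE ((hE.image g).mem_toFinset.mpr h))).trans hn₂

section Rows

variable {ι : Type*} (f : ι → Set ℝ) {ω : ℕ} (C : ι → Fin ω) (x : ι)

def neighbors : Set ι := {j | j ≠ x ∧ (f j ∩ f x).Nonempty}

def rowNeighbors (ρ : Fin ω) : Set ι := {j | j ≠ x ∧ C j = ρ ∧ (f j ∩ f x).Nonempty}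

lemma iUnion_rowNeighbors : ⋃ ρ, rowNeighbors f C x ρ = neighbors f x := by
  ext j
  simp [rowNeighbors, neighbors]

lemma nbRows_eq_card_filter (k : ℕ) :
    nbRows f C x k = (Finset.univ.filter fun ρ => (rowNeighbors f C x ρ).ncard = k).card := by
  rw [← ncard_coe_finset, Finset.coe_filter]
  simp only [Finset.mem_univ, true_and]
  rfl

variable {f C}

lemma encard_rowNeighbors_le_three (hunit : ∀ i, IsUnitInterval (f i))
    (hC : ∀ i j, i ≠ j → (f i ∩ f j).Nonempty → C i ≠ C j) (ρ : Fin ω) :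
    (rowNeighbors f C x ρ).encard ≤ 3 :=
  encard_le_three_of_pairwiseDisjoint hunit (hunit x)
    (fun i hi j hj hij => by_contra fun h =>
      hC i j hij (not_disjoint_iff_nonempty_inter.mp h) (hi.2.1.trans hj.2.1.symm))
    fun _ hj => hj.2.2

lemma rowNeighbors_self_eq_empty (hC : ∀ i j, i ≠ j → (f i ∩ f j).Nonempty → C i ≠ C j) :
    rowNeighbors f C x (C x) = ∅ :=
  eq_empty_iff_forall_notMem.mpr fun j ⟨hjx, hj, hmeet⟩ => hC j x hjx hmeet hj

lemma ncard_rowNeighbors_le_three (hunit : ∀ i, IsUnitInterval (f i))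
    (hC : ∀ i j, i ≠ j → (f i ∩ f j).Nonempty → C i ≠ C j) (ρ : Fin ω) :
    (rowNeighbors f C x ρ).ncard ≤ 3 := by
  have h := encard_rowNeighbors_le_three x hunit hC ρ
  rw [← (finite_of_encard_le_coe h).cast_ncard_eq] at h
  exact_mod_cast h

lemma neighbors_finite (hunit : ∀ i, IsUnitInterval (f i))
    (hC : ∀ i j, i ≠ j → (f i ∩ f j).Nonempty → C i ≠ C j) : (neighbors f x).Finite := by
  rw [← iUnion_rowNeighbors f C]
  exact finite_iUnion fun ρ => finite_of_encard_le_coe (encard_rowNeighbors_le_three x hunit hC ρ)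

lemma nbRows_zero_add_one_add_two_add_three (hunit : ∀ i, IsUnitInterval (f i))
    (hC : ∀ i j, i ≠ j → (f i ∩ f j).Nonempty → C i ≠ C j) :
    nbRows f C x 0 + nbRows f C x 1 + nbRows f C x 2 + nbRows f C x 3 = ω := by
  have h := Finset.card_univ_eq_sum_range_card_filter (fun ρ => (rowNeighbors f C x ρ).ncard)
    fun ρ => Nat.lt_succ_of_le (ncard_rowNeighbors_le_three x hunit hC ρ)
  simp only [Fintype.card_fin, Finset.sum_range_succ, Finset.sum_range_zero, zero_add] at h
  simp only [nbRows_eq_card_filter, h]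

lemma ncard_neighbors_le (hunit : ∀ i, IsUnitInterval (f i))
    (hC : ∀ i j, i ≠ j → (f i ∩ f j).Nonempty → C i ≠ C j) :
    (neighbors f x).ncard ≤ nbRows f C x 1 + 2 * nbRows f C x 2 + 3 * nbRows f C x 3 := by
  have h := Finset.sum_univ_eq_sum_range_mul_card_filter (fun ρ => (rowNeighbors f C x ρ).ncard)
    fun ρ => Nat.lt_succ_of_le (ncard_rowNeighbors_le_three x hunit hC ρ)
  simp only [Finset.sum_range_succ, Finset.sum_range_zero, zero_mul, one_mul, zero_add] at h
  simp only [nbRows_eq_card_filter, ← h, ← iUnion_rowNeighbors f C]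
  exact ncard_iUnion_le_of_fintype _

lemma one_le_nbRows_zero (hC : ∀ i j, i ≠ j → (f i ∩ f j).Nonempty → C i ≠ C j) :
    1 ≤ nbRows f C x 0 := by
  rw [nbRows_eq_card_filter]
  exact Finset.card_pos.mpr ⟨C x, by simp [rowNeighbors_self_eq_empty x hC]⟩

lemma firstFit_le_ncard_neighbors_add_one {ord c : ι → ℕ}
    (hcx : c x = sInf {n : ℕ | 1 ≤ n ∧
      ∀ j, j ≠ x → (f x ∩ f j).Nonempty → ord j < ord x → c j ≠ n})
    (hfin : (neighbors f x).Finite) : c x ≤ (neighbors f x).ncard + 1 := by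
  rw [hcx]
  exact Nat.sInf_le_ncard_add_one hfin c fun n hn hnE =>
    ⟨hn, fun j hjx hmeet _ hcj => hnE ⟨j, ⟨hjx, inter_comm (f x) (f j) ▸ hmeet⟩, hcj⟩⟩

end Rows

theorem stmt12_general {ι : Type*} (f : ι → Set ℝ)
    (hunit : ∀ i, IsUnitInterval (f i)) (ω : ℕ) (C : ι → Fin ω)
    (hC : ∀ i j, i ≠ j → (f i ∩ f j).Nonempty → C i ≠ C j)
    (ord : ι → ℕ) (c : ι → ℕ)
    (hc : ∀ i, c i = sInf {n : ℕ | 1 ≤ n ∧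
      ∀ j, j ≠ i → (f i ∩ f j).Nonempty → ord j < ord i → c j ≠ n})
    (x : ι) (hr : nbRows f C x 3 < nbRows f C x 1 + 2) :
    c x ≤ 2 * ω := by
  have hcx := firstFit_le_ncard_neighbors_add_one x (hc x) (neighbors_finite x hunit hC)
  have hnbrs := ncard_neighbors_le x hunit hC
  have hrows := nbRows_zero_add_one_add_two_add_three x hunit hC
  have hr₀ := one_le_nbRows_zero x hC
  -- `1 + r₁ + 2 r₂ + 3 r₃ ≤ 2 (r₀ + r₁ + r₂ + r₃)` reduces to `r₃ + 1 ≤ 2 r₀ + r₁`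
  omega

/-- If `r₃(x) < r₁(x) + 2` then the FirstFit color of `x` is at most `2ω`. -/
theorem stmt12 {ι : Type*} (f : ι → Set ℝ)
    (hunit : ∀ i, IsUnitInterval (f i)) (ω : ℕ) (C : ι → Fin ω)
    (hC : ∀ i j, i ≠ j → (f i ∩ f j).Nonempty → C i ≠ C j)
    (ord : ι → ℕ) (hord : Function.Injective ord) (c : ι → ℕ)
    (hc : ∀ i, c i = sInf {n : ℕ | 1 ≤ n ∧
      ∀ j, j ≠ i → (f i ∩ f j).Nonempty → ord j < ord i → c j ≠ n})
    (x : ι) (hr : nbRows f C x 3 < nbRows f C x 1 + 2) :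
    c x ≤ 2 * ω :=
  stmt12_general f hunit ω C hC ord c hc x hr
end

section
/- Let x be a closed unit interval [a, a+1] and z a unit interval intersecting x that is not equal (as a set) to any of [a-1, a], (a, a+1), [a+1, a+2], [a, a+1]. If a pairwise-disjoint family of open/closed unit intervals contains 3 intervals all intersecting z, then exactly 2 of those 3 intervals intersect x. -/
open Set

lemma eq_or_eq_or_eq_of_separated {c x y w : ℝ} (hx : |x - c| ≤ 1) (hy : |y - c| ≤ 1)
    (hw : |w - c| ≤ 1) (hxy : 1 ≤ |x - y|) (hxw : 1 ≤ |x - w|) (hyw : 1 ≤ |y - w|) :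
    x = c - 1 ∨ x = c ∨ x = c + 1 := by
  rw [abs_le] at hx hy hw
  rw [le_abs] at hxy hxw hyw
  rcases hxy with hxy | hxy <;> rcases hxw with hxw | hxw <;> rcases hyw with hyw | hyw <;>
    first
      | (left; linarith)
      | (right; left; linarith)
      | (right; right; linarith)

def IsUnitIntervalAt (s : Set ℝ) (r : ℝ) : Prop :=
  s = Icc r (r + 1) ∨ s = Ioo r (r + 1)

def unitTripleAround (c : ℝ) : Set (Set ℝ) :=
  {Icc (c - 1) c, Ioo c (c + 1), Icc (c + 1) (c + 2)}

namespace IsUnitIntervalAt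

variable {z s t : Set ℝ} {c r r' : ℝ}

lemma subset_Icc (hs : IsUnitIntervalAt s r) : s ⊆ Icc r (r + 1) := by
  rcases hs with rfl | rfl
  exacts [subset_rfl, Ioo_subset_Icc_self]

lemma Ioo_subset (hs : IsUnitIntervalAt s r) : Ioo r (r + 1) ⊆ s := by
  rcases hs with rfl | rfl
  exacts [Ioo_subset_Icc_self, subset_rfl]

lemma abs_sub_le_one (hs : IsUnitIntervalAt s r) (ht : IsUnitIntervalAt t r')
    (hst : (s ∩ t).Nonempty) : |r - r'| ≤ 1 := by
  obtain ⟨p, hps, hpt⟩ := hst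
  obtain ⟨hrp, hpr⟩ := hs.subset_Icc hps
  obtain ⟨hr'p, hpr'⟩ := ht.subset_Icc hpt
  exact abs_le.mpr ⟨by linarith, by linarith⟩

lemma one_le_abs_sub (hs : IsUnitIntervalAt s r) (ht : IsUnitIntervalAt t r')
    (hst : s ∩ t = ∅) : 1 ≤ |r - r'| := by
  by_contra! h
  obtain ⟨h₁, h₂⟩ := abs_lt.mp h
  have hm : (r + r' + 1) / 2 ∈ s ∩ t :=
    ⟨hs.Ioo_subset ⟨by linarith, by linarith⟩, ht.Ioo_subset ⟨by linarith, by linarith⟩⟩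
  rwa [hst] at hm

lemma add_one_mem_inter (hs : IsUnitIntervalAt s r) (ht : IsUnitIntervalAt t (r + 1))
    (hst : (s ∩ t).Nonempty) : r + 1 ∈ s ∩ t := by
  obtain ⟨p, hps, hpt⟩ := hst
  obtain rfl : p = r + 1 := le_antisymm (hs.subset_Icc hps).2 (ht.subset_Icc hpt).1
  exact ⟨hps, hpt⟩

lemma eq_Icc_of_left_mem (hs : IsUnitIntervalAt s r) (h : r ∈ s) : s = Icc r (r + 1) :=
  hs.resolve_right fun hs' => by simp [hs'] at h

lemma eq_Icc_of_right_mem (hs : IsUnitIntervalAt s r) (h : r + 1 ∈ s) : s = Icc r (r + 1) :=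
  hs.resolve_right fun hs' => by simp [hs'] at h

lemma eq_Ioo_of_inter_eq_empty (hs : IsUnitIntervalAt s r) (hst : s ∩ t = ∅)
    (h : r ∈ t ∨ r + 1 ∈ t) : s = Ioo r (r + 1) :=
  hs.resolve_left fun hs' => by
    rw [hs', eq_empty_iff_forall_notMem] at hst
    rcases h with h | h
    · exact hst r ⟨left_mem_Icc.mpr (by linarith), h⟩
    · exact hst (r + 1) ⟨right_mem_Icc.mpr (by linarith), h⟩

lemma mem_unitTripleAround (hz : IsUnitIntervalAt z c)
    (hs : IsUnitIntervalAt s r) (ht : IsUnitIntervalAt t r') (hr : r = c - 1 ∨ r = c ∨ r = c + 1)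
    (hr' : r' = c - 1 ∨ r' = c ∨ r' = c + 1) (hrr' : r ≠ r') (hst : s ∩ t = ∅)
    (hsz : (s ∩ z).Nonempty) (htz : (t ∩ z).Nonempty) : s ∈ unitTripleAround c := by
  rcases hr with rfl | rfl | rfl
  · have hc := (hs.add_one_mem_inter (by rwa [sub_add_cancel]) hsz).1
    left
    simpa using hs.eq_Icc_of_right_mem hc
  · right; left
    refine hs.eq_Ioo_of_inter_eq_empty hst ?_
    rcases hr' with rfl | rfl | rfl
    · exact Or.inl (by simpa using (ht.add_one_mem_inter (by rwa [sub_add_cancel]) htz).1)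
    · exact absurd rfl hrr'
    · exact Or.inr (hz.add_one_mem_inter ht (inter_comm t z ▸ htz)).2
  · right; right
    have hc := (hz.add_one_mem_inter hs (inter_comm s z ▸ hsz)).2
    rw [hs.eq_Icc_of_left_mem hc]
    norm_num [add_assoc]

lemma eq_Icc_of_inter_nonempty (hz : IsUnitIntervalAt z c)
    (hs : IsUnitIntervalAt s r) (hr : r = c - 1 ∨ r = c + 1) (hsz : (s ∩ z).Nonempty) :
    z = Icc c (c + 1) := by
  rcases hr with rfl | rfl
  · have hc := (hs.add_one_mem_inter (by rwa [sub_add_cancel]) hsz).2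
    exact hz.eq_Icc_of_left_mem (by simpa using hc)
  · exact hz.eq_Icc_of_right_mem (hz.add_one_mem_inter hs (inter_comm s z ▸ hsz)).1

end IsUnitIntervalAt

lemma ncard_unitTripleAround_le (c : ℝ) : (unitTripleAround c).ncard ≤ 3 := by
  grw [unitTripleAround, ncard_insert_le, ncard_insert_le, ncard_singleton]

theorem eq_unitTripleAround_of_inter_eq_empty {z s₁ s₂ s₃ : Set ℝ} {c : ℝ}
    (hz : IsUnitIntervalAt z c)
    (hu₁ : IsUnitInterval s₁) (hu₂ : IsUnitInterval s₂) (hu₃ : IsUnitInterval s₃)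
    (d₁₂ : s₁ ∩ s₂ = ∅) (d₁₃ : s₁ ∩ s₃ = ∅) (d₂₃ : s₂ ∩ s₃ = ∅)
    (hi₁ : (s₁ ∩ z).Nonempty) (hi₂ : (s₂ ∩ z).Nonempty) (hi₃ : (s₃ ∩ z).Nonempty) :
    z = Icc c (c + 1) ∧ ({s₁, s₂, s₃} : Set (Set ℝ)) = unitTripleAround c := by
  obtain ⟨r₁, hr₁ : IsUnitIntervalAt s₁ r₁⟩ := hu₁
  obtain ⟨r₂, hr₂ : IsUnitIntervalAt s₂ r₂⟩ := hu₂
  obtain ⟨r₃, hr₃ : IsUnitIntervalAt s₃ r₃⟩ := hu₃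
  have b₁ := hr₁.abs_sub_le_one hz hi₁
  have b₂ := hr₂.abs_sub_le_one hz hi₂
  have b₃ := hr₃.abs_sub_le_one hz hi₃
  have g₁₂ := hr₁.one_le_abs_sub hr₂ d₁₂
  have g₁₃ := hr₁.one_le_abs_sub hr₃ d₁₃
  have g₂₃ := hr₂.one_le_abs_sub hr₃ d₂₃
  have e₁ := eq_or_eq_or_eq_of_separated b₁ b₂ b₃ g₁₂ g₁₃ g₂₃
  have e₂ := eq_or_eq_or_eq_of_separated b₂ b₁ b₃ (abs_sub_comm r₁ r₂ ▸ g₁₂) g₂₃ g₁₃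
  have e₃ := eq_or_eq_or_eq_of_separated b₃ b₁ b₂
    (abs_sub_comm r₁ r₃ ▸ g₁₃) (abs_sub_comm r₂ r₃ ▸ g₂₃) g₁₂
  have n₁₂ : r₁ ≠ r₂ := fun h => by norm_num [h] at g₁₂
  have n₁₃ : r₁ ≠ r₃ := fun h => by norm_num [h] at g₁₃
  have n₂₃ : r₂ ≠ r₃ := fun h => by norm_num [h] at g₂₃
  refine ⟨?_, eq_of_subset_of_ncard_le ?_ ?_ (((finite_singleton _).insert _).insert _)⟩
  · by_cases h₁ : r₁ = c
    · exact hz.eq_Icc_of_inter_nonempty hr₂ (by subst h₁; tauto) hi₂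
    · exact hz.eq_Icc_of_inter_nonempty hr₁ (by tauto) hi₁
  · refine insert_subset_iff.mpr ⟨?_, pair_subset_iff.mpr ⟨?_, ?_⟩⟩
    · exact hz.mem_unitTripleAround hr₁ hr₂ e₁ e₂ n₁₂ d₁₂ hi₁ hi₂
    · exact hz.mem_unitTripleAround hr₂ hr₁ e₂ e₁ n₁₂.symm (inter_comm s₁ s₂ ▸ d₁₂) hi₂ hi₁
    · exact hz.mem_unitTripleAround hr₃ hr₁ e₃ e₁ n₁₃.symm (inter_comm s₁ s₃ ▸ d₁₃) hi₃ hi₁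
  · have ne {s t : Set ℝ} (hst : s ∩ t = ∅) (hs : (s ∩ z).Nonempty) : s ≠ t := by
      rintro rfl
      rw [inter_self] at hst
      simp [hst] at hs
    rw [ncard_eq_three.mpr ⟨s₁, s₂, s₃, ne d₁₂ hi₁, ne d₁₃ hi₁, ne d₂₃ hi₂, rfl⟩]
    exact ncard_unitTripleAround_le c

lemma ncard_sep_unitTripleAround {a c : ℝ} (h₁ : a - 1 < c) (h₂ : c < a + 1) (hca : c ≠ a) :
    {s ∈ unitTripleAround c | (s ∩ Icc a (a + 1)).Nonempty}.ncard = 2 := by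
  have hmid : (Ioo c (c + 1) ∩ Icc a (a + 1)).Nonempty :=
    ⟨(a + c + 1) / 2, ⟨by linarith, by linarith⟩, by constructor <;> linarith⟩
  rcases hca.lt_or_gt with hlt | hgt
  · have hl : ¬ (Icc (c - 1) c ∩ Icc a (a + 1)).Nonempty := fun ⟨p, hp, hp'⟩ => by
      linarith [hp.2, hp'.1]
    have hr : (Icc (c + 1) (c + 2) ∩ Icc a (a + 1)).Nonempty :=
      ⟨c + 1, ⟨le_rfl, by linarith⟩, by constructor <;> linarith⟩
    refine ncard_eq_two.mpr ⟨Ioo c (c + 1), Icc (c + 1) (c + 2), ?_, ?_⟩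
    · intro h
      have : c + 1 ∈ Icc (c + 1) (c + 2) := ⟨le_rfl, by linarith⟩
      simp [← h] at this
    · ext s
      simp only [unitTripleAround, mem_insert_iff, mem_singleton_iff]
      constructor
      · rintro ⟨rfl | rfl | rfl, h⟩ <;> simp_all
      · rintro (rfl | rfl) <;> simp_all
  · have hl : (Icc (c - 1) c ∩ Icc a (a + 1)).Nonempty :=
      ⟨c, ⟨by linarith, le_rfl⟩, by constructor <;> linarith⟩
    have hr : ¬ (Icc (c + 1) (c + 2) ∩ Icc a (a + 1)).Nonempty := fun ⟨p, hp, hp'⟩ => by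
      linarith [hp.1, hp'.2]
    refine ncard_eq_two.mpr ⟨Icc (c - 1) c, Ioo c (c + 1), ?_, ?_⟩
    · intro h
      have : c ∈ Icc (c - 1) c := ⟨by linarith, le_rfl⟩
      simp [h] at this
    · ext s
      simp only [unitTripleAround, mem_insert_iff, mem_singleton_iff]
      constructor
      · rintro ⟨rfl | rfl | rfl, h⟩ <;> simp_all
      · rintro (rfl | rfl) <;> simp_all

/-- Let `x = [a, a+1]` and `z` a unit interval meeting `x`, not equal (as a
set) to any of `[a-1, a]`, `(a, a+1)`, `[a+1, a+2]`, `[a, a+1]`. If a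
pairwise-disjoint family of open/closed unit intervals contains three
intervals all meeting `z`, then exactly 2 of those three meet `x`. -/
theorem stmt15 (a : ℝ) (z : Set ℝ) (hz : IsUnitInterval z)
    (hzx : (z ∩ Set.Icc a (a + 1)).Nonempty)
    (hznot : z ∉ ({Set.Icc (a - 1) a, Set.Ioo a (a + 1),
      Set.Icc (a + 1) (a + 2), Set.Icc a (a + 1)} : Set (Set ℝ)))
    (F : Set (Set ℝ)) (hF : ∀ s ∈ F, IsUnitInterval s)
    (hdisj : F.Pairwise fun s t => s ∩ t = ∅)
    (s₁ s₂ s₃ : Set ℝ) (h₁ : s₁ ∈ F) (h₂ : s₂ ∈ F) (h₃ : s₃ ∈ F)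
    (h12 : s₁ ≠ s₂) (h13 : s₁ ≠ s₃) (h23 : s₂ ≠ s₃)
    (hi₁ : (s₁ ∩ z).Nonempty) (hi₂ : (s₂ ∩ z).Nonempty)
    (hi₃ : (s₃ ∩ z).Nonempty) :
    ({s ∈ ({s₁, s₂, s₃} : Set (Set ℝ)) |
      (s ∩ Set.Icc a (a + 1)).Nonempty}).ncard = 2 := by
  obtain ⟨c, hc : IsUnitIntervalAt z c⟩ := hz
  obtain ⟨rfl, hrow⟩ := eq_unitTripleAround_of_inter_eq_empty hc (hF s₁ h₁) (hF s₂ h₂)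
    (hF s₃ h₃) (hdisj h₁ h₂ h12) (hdisj h₁ h₃ h13) (hdisj h₂ h₃ h23) hi₁ hi₂ hi₃
  have hca : |c - a| ≤ 1 := hc.abs_sub_le_one (Or.inl rfl) hzx
  simp only [mem_insert_iff, mem_singleton_iff, not_or] at hznot
  obtain ⟨hne₁, -, hne₃, hne₄⟩ := hznot
  have hc₁ : c ≠ a - 1 := by rintro rfl; exact hne₁ (by rw [sub_add_cancel])
  have hc₃ : c ≠ a + 1 := by rintro rfl; exact hne₃ (by rw [add_assoc, one_add_one_eq_two])
  have hc₂ : c ≠ a := by rintro rfl; exact hne₄ rfl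
  obtain ⟨hlo, hhi⟩ := abs_le.mp hca
  rw [hrow]
  exact ncard_sep_unitTripleAround (lt_of_le_of_ne (by linarith) hc₁.symm)
    (lt_of_le_of_ne (by linarith) hc₃) hc₂
end
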